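/- If f and g are continuous functions on a metric space X belonging to the weighted Lipschitz space H_{α,β}, with sup norms ‖f‖_∞ ≤ 1 and ‖g‖_∞ ≤ 1, then the product fg belongs to H_{α,β} and ‖fg‖_{α,β} ≤ ‖f‖_{α,β} + ‖g‖_{α,β}. -/
import Mathlib


open Metric

/-- `N_β(f)`: the weighted sup norm `sup_x |f x| / (1 + d(x,x₀)^β)`. -/
noncomputable def Nbeta {X : Type*} [MetricSpace X] (x₀ : X) (β : ℝ) (f : X → ℝ) : ℝ :=
  sSup {r : ℝ | ∃ x : X, r = |f x| / (1 + dist x x₀ ^ β)}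

/-- `m_{α,β}(f)`: the weighted Hölder seminorm. -/
noncomputable def mab {X : Type*} [MetricSpace X] (x₀ : X) (α β : ℝ) (f : X → ℝ) : ℝ :=
  sSup {r : ℝ | ∃ x y : X, x ≠ y ∧
    r = |f x - f y| / (dist x y ^ α * (1 + dist x x₀ ^ β))}

/-- Membership in the weighted Lipschitz space `H_{α,β}` (with the sup-sets bounded). -/
def memH {X : Type*} [MetricSpace X] (x₀ : X) (α β : ℝ) (f : X → ℝ) : Prop :=
  Continuous f ∧
  BddAbove {r : ℝ | ∃ x : X, r = |f x| / (1 + dist x x₀ ^ β)} ∧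
  BddAbove {r : ℝ | ∃ x y : X, x ≠ y ∧
    r = |f x - f y| / (dist x y ^ α * (1 + dist x x₀ ^ β))}

/-- If `f, g ∈ H_{α,β}` with `‖f‖_∞ ≤ 1` and `‖g‖_∞ ≤ 1`, then `fg ∈ H_{α,β}` and
`‖fg‖_{α,β} ≤ ‖f‖_{α,β} + ‖g‖_{α,β}`. -/
theorem product_in_H {X : Type*} [MetricSpace X] (x₀ : X) (α β : ℝ)
    (hα : 0 ≤ α) (hβ : 0 ≤ β) (f g : X → ℝ)
    (hf : memH x₀ α β f) (hg : memH x₀ α β g)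
    (hfb : ∀ x, |f x| ≤ 1) (hgb : ∀ x, |g x| ≤ 1) :
    memH x₀ α β (fun x => f x * g x) ∧
    Nbeta x₀ β (fun x => f x * g x) + mab x₀ α β (fun x => f x * g x) ≤
      (Nbeta x₀ β f + mab x₀ α β f) + (Nbeta x₀ β g + mab x₀ α β g) := by
  obtain ⟨hfc, hfN, hfm⟩ := hf
  obtain ⟨hgc, hgN, hgm⟩ := hg
  have hden : ∀ x : X, (0:ℝ) < 1 + dist x x₀ ^ β := fun x => by positivity
  have hNf_le : ∀ x, |f x| / (1 + dist x x₀ ^ β) ≤ Nbeta x₀ β f :=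
    fun x => le_csSup hfN ⟨x, rfl⟩
  have hNg_le : ∀ x, |g x| / (1 + dist x x₀ ^ β) ≤ Nbeta x₀ β g :=
    fun x => le_csSup hgN ⟨x, rfl⟩
  have hmf_le : ∀ x y, x ≠ y →
      |f x - f y| / (dist x y ^ α * (1 + dist x x₀ ^ β)) ≤ mab x₀ α β f :=
    fun x y hxy => le_csSup hfm ⟨x, y, hxy, rfl⟩
  have hmg_le : ∀ x y, x ≠ y →
      |g x - g y| / (dist x y ^ α * (1 + dist x x₀ ^ β)) ≤ mab x₀ α β g :=
    fun x y hxy => le_csSup hgm ⟨x, y, hxy, rfl⟩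
  have hNf0 : 0 ≤ Nbeta x₀ β f := le_trans (by positivity) (hNf_le x₀)
  have hNg0 : 0 ≤ Nbeta x₀ β g := le_trans (by positivity) (hNg_le x₀)
  have hmf0 : 0 ≤ mab x₀ α β f := Real.sSup_nonneg (by
    rintro r ⟨x, y, hxy, rfl⟩; positivity)
  have hmg0 : 0 ≤ mab x₀ α β g := Real.sSup_nonneg (by
    rintro r ⟨x, y, hxy, rfl⟩; positivity)
  have hNfg : ∀ x, |f x * g x| / (1 + dist x x₀ ^ β) ≤ Nbeta x₀ β f := by
    intro x
    refine le_trans ?_ (hNf_le x)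
    have h1 : |f x * g x| ≤ |f x| := by
      rw [abs_mul]
      exact mul_le_of_le_one_right (abs_nonneg _) (hgb x)
    exact div_le_div_of_nonneg_right h1 (hden x).le |>.trans_eq rfl
  have hmfg : ∀ x y, x ≠ y →
      |f x * g x - f y * g y| / (dist x y ^ α * (1 + dist x x₀ ^ β)) ≤
        mab x₀ α β f + mab x₀ α β g := by
    intro x y hxy
    have key : |f x * g x - f y * g y| ≤ |f x - f y| + |g x - g y| := by
      have heq : f x * g x - f y * g y = (f x - f y) * g y + f x * (g x - g y) := by ring
      calc |f x * g x - f y * g y| = |(f x - f y) * g y + f x * (g x - g y)| := by rw [heq]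
        _ ≤ |(f x - f y) * g y| + |f x * (g x - g y)| := abs_add_le _ _
        _ = |f x - f y| * |g y| + |f x| * |g x - g y| := by rw [abs_mul, abs_mul]
        _ ≤ |f x - f y| * 1 + 1 * |g x - g y| := by
            gcongr
            · exact hgb y
            · exact hfb x
        _ = |f x - f y| + |g x - g y| := by ring
    have hD : 0 < dist x y ^ α * (1 + dist x x₀ ^ β) := by
      have : 0 < dist x y := dist_pos.mpr hxy
      positivity
    calc |f x * g x - f y * g y| / (dist x y ^ α * (1 + dist x x₀ ^ β))
        ≤ (|f x - f y| + |g x - g y|) / (dist x y ^ α * (1 + dist x x₀ ^ β)) :=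
          div_le_div_of_nonneg_right key hD.le
      _ = |f x - f y| / (dist x y ^ α * (1 + dist x x₀ ^ β)) +
          |g x - g y| / (dist x y ^ α * (1 + dist x x₀ ^ β)) := add_div _ _ _
      _ ≤ mab x₀ α β f + mab x₀ α β g := add_le_add (hmf_le x y hxy) (hmg_le x y hxy)
  have hNfg_sup : Nbeta x₀ β (fun x => f x * g x) ≤ Nbeta x₀ β f :=
    Real.sSup_le (by rintro r ⟨x, rfl⟩; exact hNfg x) hNf0
  have hmfg_sup : mab x₀ α β (fun x => f x * g x) ≤ mab x₀ α β f + mab x₀ α β g :=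
    Real.sSup_le (by rintro r ⟨x, y, hxy, rfl⟩; exact hmfg x y hxy) (add_nonneg hmf0 hmg0)
  refine ⟨⟨hfc.mul hgc, ⟨Nbeta x₀ β f, ?_⟩, ⟨mab x₀ α β f + mab x₀ α β g, ?_⟩⟩, ?_⟩
  · rintro r ⟨x, rfl⟩; exact hNfg x
  · rintro r ⟨x, y, hxy, rfl⟩; exact hmfg x y hxy
  · linarith
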